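/- Let n ≥ 1, let A be an IFM of order n, let λ ∈ (0,1), and let p, q be real numbers with 0 < p ≤ q. Write A^m_p and A^m_q for the m-th powers of A under the maxgeneralized mean–mingeneralized mean operation with exponents p and q respectively. Suppose every column of A contains the entry ⟨1,0⟩, i.e., for every j there exists i with Aμ i j = 1 and Aν i j = 0. Then for every m ≥ 1 and all i, j one has (A^m_p)μ i j ≤ (A^m_q)μ i j ≤ 1, and as m → ∞ both (A^m_p)μ i j and (A^m_q)μ i j tend to 1 while (A^m_p)ν i j and (A^m_q)ν i j tend to 0. -/

import Mathlib

open Filter Topology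

/-- `A` (given by membership part `Amu` and non-membership part `Anu`) is an
intuitionistic fuzzy matrix. -/
def IsIFM (n : ℕ) (Amu Anu : Fin n → Fin n → ℝ) : Prop :=
  ∀ i j, 0 ≤ Amu i j ∧ 0 ≤ Anu i j ∧ Amu i j + Anu i j ≤ 1

/-- Powers of an IFM under the maxgeneralized mean–mingeneralized mean operation
with parameters `lam` and exponent `p`:
`A^1 = A` and `A^(k+1) = A^k ∘ A`, where
`(X ∘ A)μ i j = max_t (lam·(Xμ i t)^p + (1-lam)·(Aμ t j)^p)^(1/p)` and
`(X ∘ A)ν i j = min_t (lam·(Xν i t)^p + (1-lam)·(Aν t j)^p)^(1/p)`.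
(The value at `0` is irrelevant; it is set to `A`.) -/
noncomputable def gmPow (n : ℕ) (lam p : ℝ) (Amu Anu : Fin n → Fin n → ℝ) :
    ℕ → (Fin n → Fin n → ℝ) × (Fin n → Fin n → ℝ)
  | 0 => (Amu, Anu)
  | 1 => (Amu, Anu)
  | m + 2 =>
    let X := gmPow n lam p Amu Anu (m + 1)
    (fun i j => ⨆ t : Fin n, (lam * X.1 i t ^ p + (1 - lam) * Amu t j ^ p) ^ (1 / p),
     fun i j => ⨅ t : Fin n, (lam * X.2 i t ^ p + (1 - lam) * Anu t j ^ p) ^ (1 / p))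

/-!
Write `M(a, b) = (λ a^p + (1-λ) b^p)^(1/p)`. It maps `[0,1]²` to `[0,1]`, is monotone in `a`,
and increases with `p` by convexity of `x ↦ x^(q/p)`; these give `A^m_p ≤ A^m_q ≤ 1` by induction.
If `Aμ t j = 1` then `1 - M(a, 1)^p = λ (1 - a^p)`, so `(A^(m+1))μ i j ≥ (1 - λ^m)^(1/p)`;
if `Aν t j = 0` then `M(a, 0) = λ^(1/p) a`, so `(A^(m+1))ν i j ≤ (λ^(1/p))^m`.
Both bounds converge since `λ < 1`.
-/

open Set

noncomputable def genMean (lam p a b : ℝ) : ℝ :=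
  (lam * a ^ p + (1 - lam) * b ^ p) ^ (1 / p)

section genMean

variable {lam p q a a' b c : ℝ}

lemma weighted_rpow_add_nonneg (hlam0 : 0 ≤ lam) (hlam1 : lam ≤ 1) (ha : 0 ≤ a) (hb : 0 ≤ b) :
    0 ≤ lam * a ^ p + (1 - lam) * b ^ p :=
  add_nonneg (mul_nonneg hlam0 (Real.rpow_nonneg ha p))
    (mul_nonneg (sub_nonneg.2 hlam1) (Real.rpow_nonneg hb p))

lemma genMean_mem_Icc (hlam0 : 0 ≤ lam) (hlam1 : lam ≤ 1) (hp : 0 ≤ p)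
    (ha : a ∈ Icc (0 : ℝ) 1) (hb : b ∈ Icc (0 : ℝ) 1) : genMean lam p a b ∈ Icc (0 : ℝ) 1 := by
  have hsum := weighted_rpow_add_nonneg (p := p) hlam0 hlam1 ha.1 hb.1
  refine ⟨Real.rpow_nonneg hsum _, Real.rpow_le_one hsum ?_ (by positivity)⟩
  have hap := Real.rpow_le_one ha.1 ha.2 hp
  have hbp := Real.rpow_le_one hb.1 hb.2 hp
  nlinarith

lemma genMean_mono_left (hlam0 : 0 ≤ lam) (hlam1 : lam ≤ 1) (hp : 0 ≤ p)
    (ha : 0 ≤ a) (hb : 0 ≤ b) (haa' : a ≤ a') : genMean lam p a b ≤ genMean lam p a' b := by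
  unfold genMean
  gcongr

lemma genMean_mono_exponent (hlam0 : 0 ≤ lam) (hlam1 : lam ≤ 1) (hp : 0 < p) (hpq : p ≤ q)
    (ha : 0 ≤ a) (hb : 0 ≤ b) : genMean lam p a b ≤ genMean lam q a b := by
  have hq : 0 < q := hp.trans_le hpq
  have hsum := weighted_rpow_add_nonneg (p := p) hlam0 hlam1 ha hb
  have rpow_rpow : ∀ {x : ℝ}, 0 ≤ x → (x ^ p) ^ (q / p) = x ^ q := fun hx => by
    rw [← Real.rpow_mul hx, mul_div_cancel₀ _ hp.ne']
  have jensen : (lam * a ^ p + (1 - lam) * b ^ p) ^ (q / p) ≤ lam * a ^ q + (1 - lam) * b ^ q := by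
    have h := (convexOn_rpow ((one_le_div hp).2 hpq)).2 (Real.rpow_nonneg ha p)
      (Real.rpow_nonneg hb p) hlam0 (sub_nonneg.2 hlam1) (add_sub_cancel lam 1)
    simpa only [smul_eq_mul, rpow_rpow ha, rpow_rpow hb] using h
  calc genMean lam p a b = ((lam * a ^ p + (1 - lam) * b ^ p) ^ (q / p)) ^ (1 / q) := by
        rw [genMean, ← Real.rpow_mul hsum]
        congr 1
        field_simp
    _ ≤ genMean lam q a b := by
        unfold genMean
        gcongr

lemma genMean_zero_right (hlam0 : 0 ≤ lam) (hp : 0 < p) (ha : 0 ≤ a) :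
    genMean lam p a 0 = lam ^ (1 / p) * a := by
  rw [genMean, Real.zero_rpow hp.ne', mul_zero, add_zero,
    Real.mul_rpow hlam0 (Real.rpow_nonneg ha p), ← Real.rpow_mul ha, mul_one_div_cancel hp.ne',
    Real.rpow_one]

lemma rpow_le_genMean_one_right (hlam0 : 0 ≤ lam) (hlam1 : lam ≤ 1) (hp : 0 < p)
    (hc : 0 ≤ c) (hca : c ^ (1 / p) ≤ a) :
    (lam * c + (1 - lam)) ^ (1 / p) ≤ genMean lam p a 1 := by
  have hcap : c ≤ a ^ p := by
    simpa only [← Real.rpow_mul hc, one_div_mul_cancel hp.ne', Real.rpow_one] using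
      Real.rpow_le_rpow (Real.rpow_nonneg hc _) hca hp.le
  rw [genMean, Real.one_rpow, mul_one]
  gcongr

end genMean

section gmPow

variable {n : ℕ} {lam p q : ℝ} {Amu Anu : Fin n → Fin n → ℝ}

lemma IsIFM.fst_mem_Icc (hA : IsIFM n Amu Anu) (i j : Fin n) : Amu i j ∈ Icc (0 : ℝ) 1 :=
  ⟨(hA i j).1, by linarith [hA i j]⟩

lemma IsIFM.snd_mem_Icc (hA : IsIFM n Amu Anu) (i j : Fin n) : Anu i j ∈ Icc (0 : ℝ) 1 :=
  ⟨(hA i j).2.1, by linarith [hA i j]⟩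

lemma genMean_le_gmPow_fst (m : ℕ) (i t j : Fin n) :
    genMean lam p ((gmPow n lam p Amu Anu (m + 1)).1 i t) (Amu t j) ≤
      (gmPow n lam p Amu Anu (m + 2)).1 i j :=
  le_ciSup (f := fun t => genMean lam p ((gmPow n lam p Amu Anu (m + 1)).1 i t) (Amu t j))
    (finite_range _).bddAbove t

lemma gmPow_snd_le_genMean (m : ℕ) (i t j : Fin n) :
    (gmPow n lam p Amu Anu (m + 2)).2 i j ≤
      genMean lam p ((gmPow n lam p Amu Anu (m + 1)).2 i t) (Anu t j) :=
  ciInf_le (f := fun t => genMean lam p ((gmPow n lam p Amu Anu (m + 1)).2 i t) (Anu t j))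
    (finite_range _).bddBelow t

lemma gmPow_fst_mem_Icc (hA : IsIFM n Amu Anu) (hlam0 : 0 ≤ lam) (hlam1 : lam ≤ 1)
    (hp : 0 ≤ p) : ∀ m (i j : Fin n), (gmPow n lam p Amu Anu m).1 i j ∈ Icc (0 : ℝ) 1
  | 0, i, j | 1, i, j => hA.fst_mem_Icc i j
  | m + 2, i, j =>
    have entry_mem (t : Fin n) := genMean_mem_Icc hlam0 hlam1 hp
      (gmPow_fst_mem_Icc hA hlam0 hlam1 hp (m + 1) i t) (hA.fst_mem_Icc t j)
    ⟨Real.iSup_nonneg fun t => (entry_mem t).1, Real.iSup_le (fun t => (entry_mem t).2) zero_le_one⟩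

lemma gmPow_snd_mem_Icc (hA : IsIFM n Amu Anu) (hlam0 : 0 ≤ lam) (hlam1 : lam ≤ 1)
    (hp : 0 ≤ p) : ∀ m (i j : Fin n), (gmPow n lam p Amu Anu m).2 i j ∈ Icc (0 : ℝ) 1
  | 0, i, j | 1, i, j => hA.snd_mem_Icc i j
  | m + 2, i, j =>
    have entry_mem (t : Fin n) := genMean_mem_Icc hlam0 hlam1 hp
      (gmPow_snd_mem_Icc hA hlam0 hlam1 hp (m + 1) i t) (hA.snd_mem_Icc t j)
    ⟨Real.iInf_nonneg fun t => (entry_mem t).1, (gmPow_snd_le_genMean m i i j).trans (entry_mem i).2⟩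

lemma gmPow_fst_mono_exponent (hA : IsIFM n Amu Anu) (hlam0 : 0 ≤ lam) (hlam1 : lam ≤ 1)
    (hp : 0 < p) (hpq : p ≤ q) :
    ∀ m (i j : Fin n), (gmPow n lam p Amu Anu m).1 i j ≤ (gmPow n lam q Amu Anu m).1 i j
  | 0, _, _ | 1, _, _ => le_rfl
  | m + 2, i, j => ciSup_mono (finite_range _).bddAbove fun t =>
    have hX := (gmPow_fst_mem_Icc hA hlam0 hlam1 hp.le (m + 1) i t).1
    (genMean_mono_exponent hlam0 hlam1 hp hpq hX (hA t j).1).trans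
      (genMean_mono_left hlam0 hlam1 (hp.le.trans hpq) hX (hA t j).1
        (gmPow_fst_mono_exponent hA hlam0 hlam1 hp hpq (m + 1) i t))

lemma one_sub_pow_rpow_le_gmPow_fst (hA : IsIFM n Amu Anu) (hlam0 : 0 ≤ lam) (hlam1 : lam ≤ 1)
    (hp : 0 < p) (hcol : ∀ j, ∃ i, Amu i j = 1) :
    ∀ m (i j : Fin n), (1 - lam ^ m) ^ (1 / p) ≤ (gmPow n lam p Amu Anu (m + 1)).1 i j
  | 0, i, j => by
    rw [pow_zero, sub_self, Real.zero_rpow (one_div_ne_zero hp.ne')]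
    exact (hA i j).1
  | m + 1, i, j => by
    obtain ⟨t, ht⟩ := hcol j
    calc (1 - lam ^ (m + 1)) ^ (1 / p) = (lam * (1 - lam ^ m) + (1 - lam)) ^ (1 / p) := by ring_nf
      _ ≤ genMean lam p ((gmPow n lam p Amu Anu (m + 1)).1 i t) (Amu t j) := by
        rw [ht]
        exact rpow_le_genMean_one_right hlam0 hlam1 hp (sub_nonneg.2 (pow_le_one₀ hlam0 hlam1))
          (one_sub_pow_rpow_le_gmPow_fst hA hlam0 hlam1 hp hcol m i t)
      _ ≤ _ := genMean_le_gmPow_fst m i t j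

lemma gmPow_snd_le_pow (hA : IsIFM n Amu Anu) (hlam0 : 0 ≤ lam) (hlam1 : lam ≤ 1)
    (hp : 0 < p) (hcol : ∀ j, ∃ i, Anu i j = 0) :
    ∀ m (i j : Fin n), (gmPow n lam p Amu Anu (m + 1)).2 i j ≤ (lam ^ (1 / p)) ^ m
  | 0, i, j => by
    rw [pow_zero]
    exact (hA.snd_mem_Icc i j).2
  | m + 1, i, j => by
    obtain ⟨t, ht⟩ := hcol j
    have hX := (gmPow_snd_mem_Icc hA hlam0 hlam1 hp.le (m + 1) i t).1
    calc (gmPow n lam p Amu Anu (m + 2)).2 i j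
        ≤ genMean lam p ((gmPow n lam p Amu Anu (m + 1)).2 i t) (Anu t j) :=
          gmPow_snd_le_genMean m i t j
      _ = lam ^ (1 / p) * (gmPow n lam p Amu Anu (m + 1)).2 i t := by
          rw [ht, genMean_zero_right hlam0 hp hX]
      _ ≤ lam ^ (1 / p) * (lam ^ (1 / p)) ^ m := by
          gcongr
          exact gmPow_snd_le_pow hA hlam0 hlam1 hp hcol m i t
      _ = (lam ^ (1 / p)) ^ (m + 1) := (pow_succ' _ _).symm

lemma tendsto_gmPow_fst (hA : IsIFM n Amu Anu) (hlam0 : 0 ≤ lam) (hlam1 : lam < 1) (hp : 0 < p)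
    (hcol : ∀ j, ∃ i, Amu i j = 1) (i j : Fin n) :
    Tendsto (fun m => (gmPow n lam p Amu Anu m).1 i j) atTop (𝓝 1) := by
  rw [← tendsto_add_atTop_iff_nat 1]
  have hlower : Tendsto (fun m : ℕ => (1 - lam ^ m) ^ (1 / p)) atTop (𝓝 1) := by
    simpa using ((tendsto_pow_atTop_nhds_zero_of_lt_one hlam0 hlam1).const_sub 1).rpow_const
      (p := 1 / p) (Or.inr (by positivity))
  exact tendsto_of_tendsto_of_tendsto_of_le_of_le hlower tendsto_const_nhds
    (fun m => one_sub_pow_rpow_le_gmPow_fst hA hlam0 hlam1.le hp hcol m i j)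
    (fun m => (gmPow_fst_mem_Icc hA hlam0 hlam1.le hp.le (m + 1) i j).2)

lemma tendsto_gmPow_snd (hA : IsIFM n Amu Anu) (hlam0 : 0 ≤ lam) (hlam1 : lam < 1) (hp : 0 < p)
    (hcol : ∀ j, ∃ i, Anu i j = 0) (i j : Fin n) :
    Tendsto (fun m => (gmPow n lam p Amu Anu m).2 i j) atTop (𝓝 0) := by
  rw [← tendsto_add_atTop_iff_nat 1]
  exact tendsto_of_tendsto_of_tendsto_of_le_of_le tendsto_const_nhds
    (tendsto_pow_atTop_nhds_zero_of_lt_one (Real.rpow_nonneg hlam0 _)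
      (Real.rpow_lt_one hlam0 hlam1 (by positivity)))
    (fun m => (gmPow_snd_mem_Icc hA hlam0 hlam1.le hp.le (m + 1) i j).1)
    (fun m => gmPow_snd_le_pow hA hlam0 hlam1.le hp hcol m i j)

end gmPow

theorem gmPow_faster_convergence (n : ℕ)
    (Amu Anu : Fin n → Fin n → ℝ) (hA : IsIFM n Amu Anu)
    (lam : ℝ) (hlam : lam ∈ Set.Ioo (0 : ℝ) 1)
    (p q : ℝ) (hp : 0 < p) (hpq : p ≤ q)
    (hcol : ∀ j : Fin n, ∃ i : Fin n, Amu i j = 1 ∧ Anu i j = 0) :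
    (∀ m : ℕ, 1 ≤ m → ∀ i j : Fin n,
        (gmPow n lam p Amu Anu m).1 i j ≤ (gmPow n lam q Amu Anu m).1 i j ∧
        (gmPow n lam q Amu Anu m).1 i j ≤ 1) ∧
      ∀ i j : Fin n,
        Tendsto (fun m => (gmPow n lam p Amu Anu m).1 i j) atTop (𝓝 1) ∧
        Tendsto (fun m => (gmPow n lam q Amu Anu m).1 i j) atTop (𝓝 1) ∧
        Tendsto (fun m => (gmPow n lam p Amu Anu m).2 i j) atTop (𝓝 0) ∧
        Tendsto (fun m => (gmPow n lam q Amu Anu m).2 i j) atTop (𝓝 0) := by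
  have hlam0 : 0 ≤ lam := hlam.1.le
  have hq : 0 < q := hp.trans_le hpq
  have hcol_fst : ∀ j, ∃ i, Amu i j = 1 := fun j => (hcol j).imp fun _ => And.left
  have hcol_snd : ∀ j, ∃ i, Anu i j = 0 := fun j => (hcol j).imp fun _ => And.right
  refine ⟨fun m _ i j => ⟨gmPow_fst_mono_exponent hA hlam0 hlam.2.le hp hpq m i j,
      (gmPow_fst_mem_Icc hA hlam0 hlam.2.le hq.le m i j).2⟩, fun i j => ⟨?_, ?_, ?_, ?_⟩⟩
  · exact tendsto_gmPow_fst hA hlam0 hlam.2 hp hcol_fst i j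
  · exact tendsto_gmPow_fst hA hlam0 hlam.2 hq hcol_fst i j
  · exact tendsto_gmPow_snd hA hlam0 hlam.2 hp hcol_snd i j
  · exact tendsto_gmPow_snd hA hlam0 hlam.2 hq hcol_snd i j
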